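/- arXiv:2101.12747 — 6 statements merged into one kernel-verified Lean document; each statement's English description precedes it below -/
import Mathlib

section
/- Let x ∈ ℤ₂, let ℓ ≥ 1, let u be the prefix of length ℓ of the parity vector of x, and let h be the height of u. Then 2^ℓ · T^ℓ(x) = φ(u) + 3^h · x in ℤ₂. -/
/-- Height of a finite binary word: the number of `1`s (`true`s). -/
def wordHeight (u : List Bool) : ℕ := u.count true

/-- Auxiliary function realizing the recursion of `φ` on the reversed word. -/
def phiAux : List Bool → ℕ
  | [] => 0
  | b :: r => if b then 3 * phiAux r + 2 ^ r.length else phiAux r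

/-- The function `φ` on finite binary words: `φ(ε)=0`, `φ(u0)=φ(u)`,
`φ(u1)=3φ(u)+2^{ℓ(u)}`. -/
def phi (u : List Bool) : ℕ := phiAux u.reverse

/-- The prefix of length `ℓ` of the parity vector of `x ∈ ℤ₂` under the map `T`:
its `k`-th digit is `T^k(x) mod 2`. -/
noncomputable def parityPrefix (T : ℤ_[2] → ℤ_[2]) (x : ℤ_[2]) (ℓ : ℕ) : List Bool :=
  (List.range ℓ).map fun k => decide (PadicInt.toZMod (T^[k] x) = 1)

/-! Induction on `ℓ`: if `2^ℓ·y = φ(u) + 3^h·x` with `y = T^ℓ(x)`, doubling and using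
`2·T(y) = 3y + 1` (`y` odd) or `2·T(y) = y` (`y` even) reproduces exactly the recursions of `φ`
and of the height when `u` is extended by the parity digit of `y`. -/

theorem phi_append_singleton (u : List Bool) (b : Bool) :
    phi (u ++ [b]) = if b then 3 * phi u + 2 ^ u.length else phi u := by
  simp [phi, phiAux]

theorem wordHeight_append_singleton (u : List Bool) (b : Bool) :
    wordHeight (u ++ [b]) = wordHeight u + if b then 1 else 0 := by
  cases b <;> simp [wordHeight]

@[simp]
theorem length_parityPrefix (T : ℤ_[2] → ℤ_[2]) (x : ℤ_[2]) (ℓ : ℕ) :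
    (parityPrefix T x ℓ).length = ℓ := by
  simp [parityPrefix]

theorem parityPrefix_succ (T : ℤ_[2] → ℤ_[2]) (x : ℤ_[2]) (ℓ : ℕ) :
    parityPrefix T x (ℓ + 1) =
      parityPrefix T x ℓ ++ [decide (PadicInt.toZMod (T^[ℓ] x) = 1)] := by
  simp [parityPrefix, List.range_succ]

theorem two_pow_mul_apply_append_parity {T : ℤ_[2] → ℤ_[2]}
    (hT : ∀ x : ℤ_[2], 2 * T x = if PadicInt.toZMod x = 1 then 3 * x + 1 else x)
    {u : List Bool} {x y : ℤ_[2]}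
    (h : (2 : ℤ_[2]) ^ u.length * y = (phi u : ℤ_[2]) + 3 ^ wordHeight u * x) :
    (2 : ℤ_[2]) ^ (u.length + 1) * T y =
      (phi (u ++ [decide (PadicInt.toZMod y = 1)]) : ℤ_[2]) +
        3 ^ wordHeight (u ++ [decide (PadicInt.toZMod y = 1)]) * x := by
  have hstep := hT y
  rw [phi_append_singleton, wordHeight_append_singleton, pow_succ]
  by_cases hy : PadicInt.toZMod y = 1
  · simp only [hy, decide_true, if_true] at hstep ⊢
    push_cast
    linear_combination 3 * h + 2 ^ u.length * hstep
  · simp only [hy, decide_false, if_false, Bool.false_eq_true] at hstep ⊢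
    linear_combination h + 2 ^ u.length * hstep

theorem stmt1_general (T : ℤ_[2] → ℤ_[2])
    (hT : ∀ x : ℤ_[2], 2 * T x = if PadicInt.toZMod x = 1 then 3 * x + 1 else x)
    (x : ℤ_[2]) (ℓ : ℕ) :
    (2 : ℤ_[2]) ^ ℓ * T^[ℓ] x =
      (phi (parityPrefix T x ℓ) : ℤ_[2]) +
        (3 : ℤ_[2]) ^ wordHeight (parityPrefix T x ℓ) * x := by
  induction ℓ with
  | zero => simp [parityPrefix, phi, phiAux, wordHeight]
  | succ n ih =>
    have h := two_pow_mul_apply_append_parity hT (u := parityPrefix T x n) (by simpa using ih)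
    simpa [parityPrefix_succ, Function.iterate_succ_apply'] using h

/-- If `T` is the 3x+1 map on `ℤ₂` (characterized by `2·T(x) = 3x+1` for odd `x`
and `2·T(x) = x` for even `x`), `u` is the length-`ℓ` prefix (`ℓ ≥ 1`) of the
parity vector of `x` and `h` its height, then `2^ℓ · T^ℓ(x) = φ(u) + 3^h · x`. -/
theorem stmt1 (T : ℤ_[2] → ℤ_[2])
    (hT : ∀ x : ℤ_[2], 2 * T x = if PadicInt.toZMod x = 1 then 3 * x + 1 else x)
    (x : ℤ_[2]) (ℓ : ℕ) (hℓ : 1 ≤ ℓ) :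
    (2 : ℤ_[2]) ^ ℓ * T^[ℓ] x =
      (phi (parityPrefix T x ℓ) : ℤ_[2]) +
        (3 : ℤ_[2]) ^ wordHeight (parityPrefix T x ℓ) * x :=
  stmt1_general T hT x ℓ
end

section
/- Let u and w be nonempty finite binary words. If T_u(0) = T_{uw}(0), where uw denotes the concatenation of u and w, then every digit of uw equals 0. In particular, if v is an infinite binary word whose first digit is 1, then the values T_{u}(0), as u ranges over the nonempty prefixes of v, are pairwise distinct and all nonzero. -/
/-!
Write `x ∈ ℝ` as `c / 2^k` with `c` odd. For `k ≥ 1` both `T_0` and `T_1` turn such an `x`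
into one of the same form with exponent `k + 1` (for `T_1` the new numerator is `3c + 2^k`,
still odd). Reading `u` from its first `1`, `T_u(0)` therefore has an odd numerator over some
`2^k`, `k ≥ 1`, and `T_{uw}(0)` has an odd numerator over `2^(k + |w|)`; these exponents differ
when `w` is nonempty, so the two values differ. If `u` has no `1`, then `T_u(0) = 0 ≠ T_w(0)` as
soon as `w` has a `1`.
-/

/-- The maps `T_0(x) = x/2` and `T_1(x) = (3x+1)/2` on `ℝ`. -/
noncomputable def Tb (b : Bool) (x : ℝ) : ℝ := if b then (3 * x + 1) / 2 else x / 2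

/-- For a finite binary word `u = v_0 v_1 ⋯ v_{ℓ−1}`, the composite map
`T_u = T_{v_{ℓ−1}} ∘ ⋯ ∘ T_{v_1} ∘ T_{v_0}` on `ℝ` (first digit applied first). -/
noncomputable def Tword : List Bool → ℝ → ℝ
  | [], x => x
  | b :: u, x => Tword u (Tb b x)

/-- The prefix of length `ℓ` of an infinite binary word `v`. -/
def wordPrefix (v : ℕ → Bool) (ℓ : ℕ) : List Bool := (List.range ℓ).map v

theorem Tword_append (u w : List Bool) (x : ℝ) : Tword (u ++ w) x = Tword w (Tword u x) := by
  induction u generalizing x with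
  | nil => rfl
  | cons b u ih => exact ih _

theorem Tword_zero_of_true_not_mem {u : List Bool} (h : true ∉ u) : Tword u 0 = 0 := by
  induction u with
  | nil => rfl
  | cons b u ih =>
    obtain ⟨hb, hu⟩ := not_or.mp (List.mem_cons.not.mp h)
    rw [Bool.eq_false_iff.mpr (Ne.symm hb)]
    simpa [Tword, Tb] using ih hu

def IsOddDyadic (x : ℝ) (k : ℕ) : Prop := ∃ c : ℤ, Odd c ∧ x = c / 2 ^ k

namespace IsOddDyadic

variable {x : ℝ} {k l : ℕ}

theorem ne_zero (hx : IsOddDyadic x k) : x ≠ 0 := by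
  obtain ⟨c, hc, rfl⟩ := hx
  have hc0 : c ≠ 0 := by rintro rfl; simp at hc
  have : (c : ℝ) ≠ 0 := by exact_mod_cast hc0
  positivity

theorem le_of_isOddDyadic (hx : IsOddDyadic x k) (hy : IsOddDyadic x l) : l ≤ k := by
  obtain ⟨c, -, rfl⟩ := hx
  obtain ⟨c', hc', hy⟩ := hy
  by_contra! hkl
  obtain ⟨m, rfl⟩ := Nat.exists_eq_add_of_lt hkl
  have hc'eq : c' = c * 2 ^ (m + 1) := by
    rw [pow_add, pow_add] at hy
    field_simp at hy
    exact_mod_cast (by linear_combination -hy : (c' : ℝ) = c * 2 ^ (m + 1))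
  have : Even c' := ⟨c * 2 ^ m, by rw [hc'eq]; ring⟩
  exact Int.not_even_iff_odd.mpr hc' this

theorem Tb (hk : 1 ≤ k) (hx : IsOddDyadic x k) (b : Bool) : IsOddDyadic (Tb b x) (k + 1) := by
  obtain ⟨c, hc, rfl⟩ := hx
  cases b with
  | false =>
    refine ⟨c, hc, ?_⟩
    simp only [_root_.Tb, Bool.false_eq_true, if_false]
    rw [pow_succ]
    field_simp
  | true =>
    refine ⟨3 * c + 2 ^ k, ?_, ?_⟩
    · exact (Odd.mul (by decide) hc).add_even (even_two.pow_of_ne_zero (by omega))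
    · simp only [_root_.Tb, if_true]
      push_cast
      rw [pow_succ]
      field_simp

theorem Tword (hk : 1 ≤ k) (hx : IsOddDyadic x k) (w : List Bool) :
    IsOddDyadic (Tword w x) (k + w.length) := by
  induction w generalizing x k with
  | nil => exact hx
  | cons b w ih =>
    rw [List.length_cons, ← add_assoc, add_right_comm]
    exact ih (by omega) (hx.Tb hk b)

end IsOddDyadic

theorem exists_isOddDyadic_Tword_zero {u : List Bool} (h : true ∈ u) :
    ∃ k, 1 ≤ k ∧ IsOddDyadic (Tword u 0) k := by
  induction u with
  | nil => simp at h
  | cons b u ih =>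
    cases b with
    | false =>
      simpa [Tword, Tb] using ih (by simpa using h)
    | true =>
      have half : IsOddDyadic (Tb true 0) 1 := ⟨1, odd_one, by norm_num [Tb]⟩
      exact ⟨1 + u.length, by omega, half.Tword le_rfl u⟩

theorem Tword_zero_ne_zero {u : List Bool} (h : true ∈ u) : Tword u 0 ≠ 0 := by
  obtain ⟨k, -, hk⟩ := exists_isOddDyadic_Tword_zero h
  exact hk.ne_zero

theorem Tword_zero_ne_Tword_append_zero {u w : List Bool} (hw : w ≠ []) (h : true ∈ u ++ w) :
    Tword u 0 ≠ Tword (u ++ w) 0 := by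
  rw [Tword_append]
  by_cases hu : true ∈ u
  · obtain ⟨k, hk, hx⟩ := exists_isOddDyadic_Tword_zero hu
    intro heq
    have := (heq ▸ hx).le_of_isOddDyadic (hx.Tword hk w)
    have := List.length_pos_iff.mpr hw
    omega
  · rw [Tword_zero_of_true_not_mem hu]
    have hw' : true ∈ w := (List.mem_append.mp h).resolve_left hu
    exact (Tword_zero_ne_zero hw').symm

theorem wordPrefix_add (v : ℕ → Bool) (m d : ℕ) :
    wordPrefix v (m + d) = wordPrefix v m ++ (List.range d).map (fun i => v (m + i)) := by
  simp only [wordPrefix, List.range_add, List.map_append, List.map_map]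
  rfl

/-- (a) If `u, w` are nonempty finite binary words with `T_u(0) = T_{uw}(0)`,
then every digit of `uw` is `0`.  (b) Consequently, for an infinite binary word
`v` starting with digit `1`, the values `T_u(0)` over nonempty prefixes `u` of
`v` are pairwise distinct and all nonzero. -/
theorem stmt2 :
    (∀ u w : List Bool, u ≠ [] → w ≠ [] → Tword u 0 = Tword (u ++ w) 0 →
      ∀ b ∈ u ++ w, b = false) ∧
    (∀ v : ℕ → Bool, v 0 = true →
      (∀ m n : ℕ, 1 ≤ m → 1 ≤ n → m ≠ n →
        Tword (wordPrefix v m) 0 ≠ Tword (wordPrefix v n) 0) ∧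
      (∀ n : ℕ, 1 ≤ n → Tword (wordPrefix v n) 0 ≠ 0)) := by
  refine ⟨fun u w _ hw h b hb => ?_, fun v hv => ?_⟩
  · cases b
    · rfl
    · exact absurd h (Tword_zero_ne_Tword_append_zero hw hb)
  have htrue : ∀ n, 1 ≤ n → true ∈ wordPrefix v n :=
    fun n hn => List.mem_map.mpr ⟨0, List.mem_range.mpr hn, hv⟩
  have hlt : ∀ m n, 1 ≤ m → m < n →
      Tword (wordPrefix v m) 0 ≠ Tword (wordPrefix v n) 0 := by
    intro m n hm hmn
    obtain ⟨d, rfl⟩ := Nat.exists_eq_add_of_lt hmn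
    rw [add_assoc, wordPrefix_add]
    exact Tword_zero_ne_Tword_append_zero (by simp) (List.mem_append_left _ (htrue m hm))
  refine ⟨fun m n hm hn hmn => ?_, fun n hn => Tword_zero_ne_zero (htrue n hn)⟩
  rcases hmn.lt_or_gt with h | h
  · exact hlt m n hm h
  · exact (hlt n m hn h).symm
end

section
/- Let u be a nonempty finite binary word with length ℓ and height h. Then, in the ring ℤ₂ of 2-adic integers (where 3 is invertible), T^ℓ(−φ(u)/3^h) = 0. -/
/-!
Write `x(u) = -φ(u)/3^{h(u)}` (`phiSeed u` below). Reading `φ` from the front of the word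
gives `φ(b v) = 2φ(v) + [b]·3^{h(v)}`, so `x(b v) ≡ b (mod 2)`, and one step of `T` sends
`x(b v)` to `x(v)`: for `b = 0` this is `x(0 v) = 2x(v)`, for `b = 1` it is
`3x(1 v) + 1 = 2x(v)`. After `ℓ(u)` steps we reach `x(ε) = 0`.
-/

open PadicInt

lemma phiAux_append (r : List Bool) (b : Bool) :
    phiAux (r ++ [b]) = 2 * phiAux r + if b then 3 ^ r.count true else 0 := by
  induction r with
  | nil => cases b <;> simp [phiAux]
  | cons c r ih =>
    cases c <;> cases b <;> simp [phiAux, ih, pow_succ] <;> ring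

lemma phi_cons (b : Bool) (v : List Bool) :
    phi (b :: v) = 2 * phi v + if b then 3 ^ wordHeight v else 0 := by
  simp [phi, wordHeight, phiAux_append, List.count_reverse]

lemma wordHeight_cons (b : Bool) (v : List Bool) :
    wordHeight (b :: v) = wordHeight v + if b then 1 else 0 := by
  cases b <;> simp [wordHeight]

lemma PadicInt.isUnit_three : IsUnit (3 : ℤ_[2]) :=
  isUnit_iff.mpr <| by exact_mod_cast norm_natCast_eq_one_iff.mpr (by norm_num : Nat.Coprime 2 3)

lemma PadicInt.toZMod_three : toZMod (3 : ℤ_[2]) = 1 := by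
  rw [map_ofNat]
  decide

noncomputable def phiSeed (u : List Bool) : ℤ_[2] :=
  -(phi u : ℤ_[2]) * Ring.inverse ((3 : ℤ_[2]) ^ wordHeight u)

lemma pow_mul_phiSeed (u : List Bool) : 3 ^ wordHeight u * phiSeed u = -(phi u : ℤ_[2]) := by
  rw [phiSeed, mul_left_comm, Ring.mul_inverse_cancel _ (isUnit_three.pow _), mul_one]

lemma eq_phiSeed_iff {x : ℤ_[2]} {u : List Bool} :
    x = phiSeed u ↔ 3 ^ wordHeight u * x = -(phi u : ℤ_[2]) := by
  rw [← pow_mul_phiSeed, (isUnit_three.pow _).mul_right_inj]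

lemma toZMod_phiSeed (u : List Bool) : toZMod (phiSeed u) = phi u := by
  have h := congrArg toZMod (pow_mul_phiSeed u)
  rwa [map_mul, map_pow, toZMod_three, one_pow, one_mul, map_neg, map_natCast,
    ZMod.neg_eq_self_mod_two] at h

lemma toZMod_phiSeed_cons (b : Bool) (v : List Bool) :
    toZMod (phiSeed (b :: v)) = if b then 1 else 0 := by
  rw [toZMod_phiSeed, phi_cons]
  cases b <;> simp [(by decide : (2 : ZMod 2) = 0), (by decide : (3 : ZMod 2) = 1)]

lemma phiSeed_cons_false (v : List Bool) : phiSeed (false :: v) = 2 * phiSeed v := by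
  symm
  rw [eq_phiSeed_iff]
  simp only [wordHeight_cons, phi_cons, Bool.false_eq_true, ↓reduceIte, add_zero]
  push_cast
  linear_combination 2 * pow_mul_phiSeed v

lemma three_mul_phiSeed_cons_true_add_one (v : List Bool) :
    3 * phiSeed (true :: v) + 1 = 2 * phiSeed v := by
  have h := pow_mul_phiSeed (true :: v)
  simp only [wordHeight_cons, phi_cons, ↓reduceIte, pow_succ] at h
  push_cast at h
  apply (isUnit_three.pow (wordHeight v)).mul_left_cancel
  linear_combination h - 2 * pow_mul_phiSeed v

section CollatzMap

variable {T : ℤ_[2] → ℤ_[2]}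
  (hT : ∀ x : ℤ_[2], 2 * T x = if toZMod x = 1 then 3 * x + 1 else x)
include hT

lemma apply_phiSeed_cons (b : Bool) (v : List Bool) : T (phiSeed (b :: v)) = phiSeed v := by
  apply mul_left_cancel₀ (two_ne_zero : (2 : ℤ_[2]) ≠ 0)
  rw [hT, toZMod_phiSeed_cons]
  cases b
  · simp [phiSeed_cons_false]
  · simp [three_mul_phiSeed_cons_true_add_one]

lemma iterate_length_phiSeed (u : List Bool) : T^[u.length] (phiSeed u) = 0 := by
  induction u with
  | nil => simp [phiSeed, phi, phiAux]
  | cons b v ih => rwa [List.length_cons, Function.iterate_succ_apply, apply_phiSeed_cons hT]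

end CollatzMap

theorem stmt3_general (T : ℤ_[2] → ℤ_[2])
    (hT : ∀ x : ℤ_[2], 2 * T x = if PadicInt.toZMod x = 1 then 3 * x + 1 else x)
    (u : List Bool) :
    T^[u.length] (-(phi u : ℤ_[2]) * Ring.inverse ((3 : ℤ_[2]) ^ wordHeight u)) = 0 :=
  iterate_length_phiSeed hT u

/-- If `T` is the 3x+1 map on `ℤ₂` and `u` is a nonempty finite binary word of
length `ℓ` and height `h`, then `T^ℓ(−φ(u)/3^h) = 0`, where `/3^h` is
multiplication by the inverse of the unit `3^h` of `ℤ₂`. -/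
theorem stmt3 (T : ℤ_[2] → ℤ_[2])
    (hT : ∀ x : ℤ_[2], 2 * T x = if PadicInt.toZMod x = 1 then 3 * x + 1 else x)
    (u : List Bool) (hu : u ≠ []) :
    T^[u.length] (-(phi u : ℤ_[2]) * Ring.inverse ((3 : ℤ_[2]) ^ wordHeight u)) = 0 :=
  stmt3_general T hT u
end

section
/- Let u be a finite binary word with length ℓ ≥ 1 and height h ≥ 1. Then, in the p-adic absolute value on ℚ: |(−φ(u)/3^h) − φ(u)/(2^ℓ − 3^h)|₂ ≤ 2^{−ℓ}, and |φ(u)/2^ℓ − φ(u)/(2^ℓ − 3^h)|₃ = 3^{−h}. -/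
section PadicNorm

variable {p q : ℕ} [Fact p.Prime]

lemma padicNorm_prime_pow (n : ℕ) :
    padicNorm p ((p : ℚ) ^ n) = ((p : ℚ) ^ n)⁻¹ := by
  rw [IsAbsoluteValue.abv_pow (padicNorm p), padicNorm.padicNorm_p_of_prime, inv_pow]

lemma padicNorm_natCast_pow_of_not_dvd (hpq : ¬ p ∣ q) (n : ℕ) :
    padicNorm p ((q : ℚ) ^ n) = 1 := by
  rw [IsAbsoluteValue.abv_pow (padicNorm p), (padicNorm.nat_eq_one_iff q).2 hpq, one_pow]

lemma padicNorm_prime_pow_sub_pow (hpq : ¬ p ∣ q) {m : ℕ} (hm : m ≠ 0) (n : ℕ) :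
    padicNorm p ((p : ℚ) ^ m - (q : ℚ) ^ n) = 1 := by
  have hdiff : ¬ (p : ℤ) ∣ (p : ℤ) ^ m - (q : ℤ) ^ n := by
    intro hdvd
    have hqn : (p : ℤ) ∣ ((q ^ n : ℕ) : ℤ) := by
      simpa using dvd_sub (dvd_pow_self (p : ℤ) hm) hdvd
    exact hpq ((Fact.out : p.Prime).dvd_of_dvd_pow (Int.natCast_dvd_natCast.mp hqn))
  exact_mod_cast (padicNorm.int_eq_one_iff _).2 hdiff

theorem padicNorm_neg_div_pow_sub_div_le (hpq : ¬ p ∣ q) {l : ℕ} (hl : l ≠ 0) (h : ℕ) (N : ℤ) :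
    padicNorm p (-(N : ℚ) / (q : ℚ) ^ h - N / ((p : ℚ) ^ l - (q : ℚ) ^ h)) ≤ ((p : ℚ) ^ l)⁻¹ := by
  have hqh := padicNorm_natCast_pow_of_not_dvd hpq h
  have hD := padicNorm_prime_pow_sub_pow hpq hl h
  have hqh0 : (q : ℚ) ^ h ≠ 0 := fun h0 => by simp [h0] at hqh
  have hD0 : (p : ℚ) ^ l - (q : ℚ) ^ h ≠ 0 := fun h0 => by simp [h0] at hD
  have key : -(N : ℚ) / (q : ℚ) ^ h - N / ((p : ℚ) ^ l - (q : ℚ) ^ h)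
      = -((N : ℚ) * (p : ℚ) ^ l / ((q : ℚ) ^ h * ((p : ℚ) ^ l - (q : ℚ) ^ h))) := by
    field_simp
    ring
  rw [key, padicNorm.neg, padicNorm.div, padicNorm.mul, padicNorm.mul, padicNorm_prime_pow,
    hqh, hD, one_mul, div_one]
  exact mul_le_of_le_one_left (by positivity) (padicNorm.of_int N)

theorem padicNorm_div_pow_sub_div_eq (hqp : ¬ p ∣ q) (l : ℕ) {h : ℕ} (hh : h ≠ 0) {N : ℤ}
    (hN : ¬ (p : ℤ) ∣ N) :
    padicNorm p ((N : ℚ) / (q : ℚ) ^ l - N / ((q : ℚ) ^ l - (p : ℚ) ^ h)) = ((p : ℚ) ^ h)⁻¹ := by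
  have hql := padicNorm_natCast_pow_of_not_dvd hqp l
  have hD : padicNorm p ((q : ℚ) ^ l - (p : ℚ) ^ h) = 1 := by
    rw [← neg_sub, padicNorm.neg, padicNorm_prime_pow_sub_pow hqp hh]
  have hql0 : (q : ℚ) ^ l ≠ 0 := fun h0 => by simp [h0] at hql
  have hD0 : (q : ℚ) ^ l - (p : ℚ) ^ h ≠ 0 := fun h0 => by simp [h0] at hD
  have key : (N : ℚ) / (q : ℚ) ^ l - N / ((q : ℚ) ^ l - (p : ℚ) ^ h)
      = -((N : ℚ) * (p : ℚ) ^ h / ((q : ℚ) ^ l * ((q : ℚ) ^ l - (p : ℚ) ^ h))) := by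
    field_simp
    ring
  rw [key, padicNorm.neg, padicNorm.div, padicNorm.mul, padicNorm.mul, padicNorm_prime_pow,
    hql, hD, (padicNorm.int_eq_one_iff N).2 hN, one_mul, one_mul, div_one]

end PadicNorm

lemma three_not_dvd_phiAux {w : List Bool} (hw : true ∈ w) : ¬ 3 ∣ phiAux w := by
  induction w with
  | nil => simp at hw
  | cons b r ih =>
    cases b with
    | true =>
      rw [phiAux, if_pos rfl, Nat.dvd_add_right (dvd_mul_right 3 _)]
      exact fun h3 => by simpa using Nat.prime_three.dvd_of_dvd_pow h3
    | false =>
      simpa [phiAux] using ih (by simpa using hw)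

lemma three_not_dvd_phi {u : List Bool} (hu : 1 ≤ wordHeight u) : ¬ 3 ∣ phi u :=
  three_not_dvd_phiAux (List.mem_reverse.2 (List.count_pos_iff.1 hu))

/-- For a finite binary word `u` of length `ℓ ≥ 1` and height `h ≥ 1`:
`|(−φ(u)/3^h) − φ(u)/(2^ℓ − 3^h)|₂ ≤ 2^{−ℓ}` and
`|φ(u)/2^ℓ − φ(u)/(2^ℓ − 3^h)|₃ = 3^{−h}`. -/
theorem stmt16 (u : List Bool) (hl : 1 ≤ u.length) (hh : 1 ≤ wordHeight u) :
    padicNorm 2 (-(phi u : ℚ) / 3 ^ wordHeight u -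
        (phi u : ℚ) / ((2 : ℚ) ^ u.length - 3 ^ wordHeight u)) ≤
      ((2 : ℚ) ^ u.length)⁻¹ ∧
    padicNorm 3 ((phi u : ℚ) / 2 ^ u.length -
        (phi u : ℚ) / ((2 : ℚ) ^ u.length - 3 ^ wordHeight u)) =
      ((3 : ℚ) ^ wordHeight u)⁻¹ := by
  have hN : ¬ ((3 : ℕ) : ℤ) ∣ (phi u : ℤ) := by exact_mod_cast three_not_dvd_phi hh
  constructor
  · simpa using padicNorm_neg_div_pow_sub_div_le (p := 2) (q := 3) (by norm_num)
      (by omega : u.length ≠ 0) (wordHeight u) (phi u)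
  · simpa using padicNorm_div_pow_sub_div_eq (p := 3) (q := 2) (by norm_num) u.length
      (by omega : wordHeight u ≠ 0) hN
end

section
/- Let α = log 2 / log 3 and for each integer i ≥ 1 set t_i = 2^{⌊(i−1)/α⌋}/3^i (these are the terms of the series −Φ_ℝ(1c_α)). Then the arithmetic means converge: lim_{m→∞} (1/m) ∑_{i=1}^m t_i = 1/(6 ln 2). -/
/-!
Write `β = log 3 / log 2 = (log 2 / log 3)⁻¹`. Since `2 ^ (n β) = 3 ^ n`, the `(n + 1)`-st term is
`t_{n+1} = 3⁻¹ · 2 ^ (-{n β})`, so the claim says that the averages of `2 ^ (-{n β})` tend to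
`∫₀¹ 2 ^ (-u) du = 1 / (2 log 2)`. This is Weyl's equidistribution theorem for the irrational
number `β`: for a character `e(k ·)`, `k ≠ 0`, the averages along the orbit are averages of a
geometric progression with ratio `≠ 1` and tend to `0`; the averaging functionals are uniformly
Lipschitz on `C(ℝ/ℤ, ℂ)`, so convergence passes from the dense span of the characters to all
continuous functions. The function `2 ^ (-Int.fract u)` jumps at the integers, and is squeezed
between continuous periodic functions whose integrals differ from `1 / (2 log 2)` by
arbitrarily little.
-/

open Filter Finset Topology MeasureTheory

lemma tendsto_geom_sum_div_nat_zero {𝕜 : Type*} [RCLike 𝕜] {z : 𝕜} (hz : ‖z‖ ≤ 1) (h1 : z ≠ 1) :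
    Tendsto (fun m : ℕ => (∑ n ∈ range m, z ^ n) / m) atTop (𝓝 0) := by
  have hz1 : 0 < ‖z - 1‖ := norm_pos_iff.2 (sub_ne_zero.2 h1)
  refine squeeze_zero_norm (fun m => ?_) (tendsto_const_div_atTop_nhds_zero_nat (2 / ‖z - 1‖))
  rw [geom_sum_eq h1, norm_div, norm_div, RCLike.norm_natCast]
  have : ‖z ^ m - 1‖ ≤ 2 := (norm_sub_le _ _).trans (by
    rw [norm_pow, norm_one]; linarith [pow_le_one₀ (norm_nonneg z) hz (n := m)])
  gcongr

lemma tendsto_of_sandwich_family {α : Type*} {l : Filter α} {u : α → ℝ} {L : ℝ} {c : ℕ → ℝ}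
    (hc : Tendsto c atTop (𝓝 0)) {lo hi : ℕ → α → ℝ} (hlo : ∀ N a, lo N a ≤ u a)
    (hhi : ∀ N a, u a ≤ hi N a) (hlo_lim : ∀ N, Tendsto (lo N) l (𝓝 (L - c N)))
    (hhi_lim : ∀ N, Tendsto (hi N) l (𝓝 (L + c N))) : Tendsto u l (𝓝 L) := by
  rw [tendsto_order]
  constructor
  · intro b hb
    have : Tendsto (fun N => L - c N) atTop (𝓝 L) := by simpa using hc.const_sub L
    obtain ⟨N, hN⟩ := (this.eventually (lt_mem_nhds hb)).exists
    exact ((hlo_lim N).eventually (lt_mem_nhds hN)).mono fun a ha => ha.trans_le (hlo N a)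
  · intro b hb
    have : Tendsto (fun N => L + c N) atTop (𝓝 L) := by simpa using hc.const_add L
    obtain ⟨N, hN⟩ := (this.eventually (gt_mem_nhds hb)).exists
    exact ((hhi_lim N).eventually (gt_mem_nhds hN)).mono fun a ha => (hhi N a).trans_lt ha

namespace ContinuousMap

variable {X : Type*} [TopologicalSpace X] [CompactSpace X]

lemma integrable_of_compactSpace [MeasurableSpace X] [OpensMeasurableSpace X] (f : C(X, ℂ))
    (μ : Measure X) [IsFiniteMeasure μ] : Integrable f μ :=
  f.continuous.integrable_of_hasCompactSupport (HasCompactSupport.of_compactSpace _)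

lemma norm_average_le (f : C(X, ℂ)) (p : ℕ → X) (m : ℕ) :
    ‖(∑ n ∈ range m, f (p n)) / m‖ ≤ ‖f‖ := by
  rcases Nat.eq_zero_or_pos m with rfl | hm
  · simp
  rw [norm_div, Complex.norm_natCast, div_le_iff₀ (by exact_mod_cast hm)]
  calc ‖∑ n ∈ range m, f (p n)‖ ≤ ∑ _n ∈ range m, ‖f‖ :=
        norm_sum_le_of_le _ fun n _ => f.norm_coe_le_norm (p n)
    _ = ‖f‖ * m := by rw [sum_const, card_range, nsmul_eq_mul, mul_comm]

lemma lipschitzWith_average (p : ℕ → X) (m : ℕ) :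
    LipschitzWith 1 fun f : C(X, ℂ) => (∑ n ∈ range m, f (p n)) / m :=
  LipschitzWith.of_dist_le_mul fun f g => by
    rw [NNReal.coe_one, one_mul, dist_eq_norm, dist_eq_norm, ← sub_div, ← sum_sub_distrib]
    exact norm_average_le (f - g) p m

lemma lipschitzWith_integral [MeasurableSpace X] [OpensMeasurableSpace X] (μ : Measure X)
    [IsProbabilityMeasure μ] : LipschitzWith 1 fun f : C(X, ℂ) => ∫ x, f x ∂μ :=
  LipschitzWith.of_dist_le_mul fun f g => by
    rw [dist_eq_norm, dist_eq_norm, ← integral_sub (f.integrable_of_compactSpace μ)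
      (g.integrable_of_compactSpace μ), NNReal.coe_one, one_mul]
    simpa using norm_integral_le_of_norm_le_const (μ := μ)
      (Eventually.of_forall fun x => (f - g).norm_coe_le_norm x)

end ContinuousMap

namespace AddCircle

variable {T : ℝ}

lemma fourier_nsmul (k : ℤ) (x : AddCircle T) (n : ℕ) : fourier k (n • x) = fourier k x ^ n := by
  rw [fourier_apply, fourier_apply, smul_comm, toCircle_nsmul, Circle.coe_pow]

variable [Fact (0 < T)]

lemma fourier_ne_one {x : AddCircle T} (hx : addOrderOf x = 0) {k : ℤ} (hk : k ≠ 0) :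
    fourier k x ≠ 1 := by
  rw [fourier_apply, ← Circle.coe_one, ne_eq, Circle.coe_inj, ← toCircle_zero (T := T),
    (injective_toCircle (Fact.out : 0 < T).ne').eq_iff]
  intro h
  exact addOrderOf_eq_zero_iff.1 hx (isOfFinAddOrder_iff_zsmul_eq_zero.2 ⟨k, hk, h⟩)

lemma integral_fourier_haarAddCircle {k : ℤ} (hk : k ≠ 0) :
    ∫ y, fourier k y ∂(haarAddCircle (T := T)) = (0 : ℂ) := by
  simpa [fourierCoeff, Pi.single_apply, hk.symm] using
    congr_fun (fourierCoeff_fourier (T := T) k) 0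

lemma tendsto_average_fourier {x : AddCircle T} (hx : addOrderOf x = 0) (k : ℤ) :
    Tendsto (fun m : ℕ => (∑ n ∈ range m, fourier k (n • x)) / m) atTop
      (𝓝 (∫ y, fourier k y ∂(haarAddCircle (T := T)))) := by
  rcases eq_or_ne k 0 with rfl | hk
  · simp only [fourier_zero, integral_const, probReal_univ, one_smul, sum_const, card_range,
      nsmul_eq_mul, mul_one]
    exact tendsto_const_nhds.congr' <| (eventually_ne_atTop 0).mono fun m hm =>
      (div_self (Nat.cast_ne_zero.2 hm)).symm
  · simp only [fourier_nsmul, integral_fourier_haarAddCircle hk]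
    exact tendsto_geom_sum_div_nat_zero (by rw [fourier_apply, Circle.norm_coe])
      (fourier_ne_one hx hk)

theorem tendsto_average_nsmul {x : AddCircle T} (hx : addOrderOf x = 0) (f : C(AddCircle T, ℂ)) :
    Tendsto (fun m : ℕ => (∑ n ∈ range m, f (n • x)) / m) atTop
      (𝓝 (∫ y, f y ∂haarAddCircle)) := by
  set S := {f : C(AddCircle T, ℂ) |
    Tendsto (fun m : ℕ => (∑ n ∈ range m, f (n • x)) / m) atTop (𝓝 (∫ y, f y ∂haarAddCircle))}
  have hS : IsClosed S :=
    (LipschitzWith.uniformEquicontinuous _ 1 (ContinuousMap.lipschitzWith_average (· • x)))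
      |>.equicontinuous.isClosed_setOfPred_tendsto
        (ContinuousMap.lipschitzWith_integral _).continuous
  have hspan : (Submodule.span ℂ (Set.range (@fourier T)) : Set _) ⊆ S := fun g hg => by
    induction hg using Submodule.span_induction with
    | mem _ hg => obtain ⟨k, rfl⟩ := hg; exact tendsto_average_fourier hx k
    | zero => simp [S]
    | add g h _ _ hg hh =>
      simpa [S, sum_add_distrib, add_div, integral_add (g.integrable_of_compactSpace _)
        (h.integrable_of_compactSpace _)] using hg.add hh
    | smul c g _ hg =>
      simpa [S, ← mul_sum, mul_div_assoc, integral_const_mul] using hg.const_mul c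
  have hdense := congrArg SetLike.coe (span_fourier_closure_eq_top (T := T))
  rw [Submodule.topologicalClosure_coe] at hdense
  exact hS.closure_subset_iff.2 hspan (hdense ▸ Set.mem_univ f)

end AddCircle

lemma Irrational.addOrderOf_coe_unitAddCircle {ξ : ℝ} (hξ : Irrational ξ) :
    addOrderOf (ξ : UnitAddCircle) = 0 := by
  rw [addOrderOf_eq_zero_iff, AddCircle.isOfFinAddOrder_iff_exists_rat_eq_div, div_one]
  rintro ⟨q, hq⟩
  exact hξ ⟨q, hq⟩

theorem Function.Periodic.tendsto_average_mul_irrational {F : ℝ → ℝ} (hF : Function.Periodic F 1)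
    (hFc : Continuous F) {ξ : ℝ} (hξ : Irrational ξ) :
    Tendsto (fun m : ℕ => (∑ n ∈ range m, F (n * ξ)) / m) atTop (𝓝 (∫ x in (0 : ℝ)..1, F x)) := by
  let f : C(UnitAddCircle, ℂ) :=
    ⟨fun y => hF.lift y, Complex.continuous_ofReal.comp (hFc.quotient_liftOn' _)⟩
  have hf (x : ℝ) : f x = F x := rfl
  have h := AddCircle.tendsto_average_nsmul hξ.addOrderOf_coe_unitAddCircle f
  rw [AddCircle.integral_haarAddCircle, ← UnitAddCircle.intervalIntegral_preimage 0] at h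
  simp only [← AddCircle.coe_nsmul, hf, nsmul_eq_mul, zero_add, inv_one, one_smul,
    intervalIntegral.integral_ofReal] at h
  exact tendsto_ofReal_iff.1 (by simpa using h)

lemma intervalIntegral_comp_fract {ψ : ℝ → ℝ} (h : ψ 0 = ψ 1) :
    ∫ x in (0 : ℝ)..1, ψ (Int.fract x) = ∫ x in (0 : ℝ)..1, ψ x := by
  refine intervalIntegral.integral_congr fun x hx => ?_
  rw [Set.uIcc_of_le zero_le_one] at hx
  rcases hx.2.lt_or_eq with hlt | rfl
  · rw [Int.fract_eq_self.2 ⟨hx.1, hlt⟩]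
  · rw [Int.fract_one, h]

theorem tendsto_average_comp_fract_of_eq {ψ : ℝ → ℝ} (hψ : ContinuousOn ψ (Set.Icc 0 1))
    (h01 : ψ 0 = ψ 1) {ξ : ℝ} (hξ : Irrational ξ) :
    Tendsto (fun m : ℕ => (∑ n ∈ range m, ψ (Int.fract (n * ξ))) / m) atTop
      (𝓝 (∫ u in (0 : ℝ)..1, ψ u)) := by
  rw [← intervalIntegral_comp_fract h01]
  exact Function.Periodic.tendsto_average_mul_irrational (fun x => by simp)
    (hψ.comp_fract'' h01) hξ

/-- Added to `φ` with `a - b = φ 0 - φ 1`, this removes the jump of `φ ∘ Int.fract` at the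
integers. -/
def jumpCorrection (a b : ℝ) (N : ℕ) (u : ℝ) : ℝ := a * u ^ (N + 1) + b * (1 - u) ^ (N + 1)

lemma continuous_jumpCorrection (a b : ℝ) (N : ℕ) : Continuous (jumpCorrection a b N) :=
  show Continuous fun u : ℝ => a * u ^ (N + 1) + b * (1 - u) ^ (N + 1) by fun_prop

lemma integral_jumpCorrection (a b : ℝ) (N : ℕ) :
    ∫ u in (0 : ℝ)..1, jumpCorrection a b N u = (a + b) / (N + 2) := by
  have h1 : ∫ u in (0 : ℝ)..1, (1 - u) ^ (N + 1) = ∫ u in (0 : ℝ)..1, u ^ (N + 1) := by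
    rw [intervalIntegral.integral_comp_sub_left (fun u : ℝ => u ^ (N + 1)) (1 : ℝ)]
    norm_num
  simp only [jumpCorrection]
  rw [intervalIntegral.integral_add, intervalIntegral.integral_const_mul,
    intervalIntegral.integral_const_mul, h1, integral_pow]
  · push_cast; ring
  all_goals exact (by fun_prop : Continuous _).intervalIntegrable _ _

lemma jumpCorrection_nonneg {a b : ℝ} (ha : 0 ≤ a) (hb : 0 ≤ b) (N : ℕ) {u : ℝ}
    (hu : u ∈ Set.Icc (0 : ℝ) 1) : 0 ≤ jumpCorrection a b N u := by
  have := hu.1; have := hu.2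
  unfold jumpCorrection; positivity

lemma tendsto_average_comp_fract_add_jumpCorrection {φ : ℝ → ℝ}
    (hφ : ContinuousOn φ (Set.Icc 0 1)) {ξ : ℝ} (hξ : Irrational ξ) {a b : ℝ}
    (hab : a - b = φ 0 - φ 1) (N : ℕ) :
    Tendsto (fun m : ℕ => (∑ n ∈ range m, (φ + jumpCorrection a b N) (Int.fract (n * ξ))) / m)
      atTop (𝓝 ((∫ u in (0 : ℝ)..1, φ u) + (a + b) / (N + 2))) := by
  have hψ : ContinuousOn (φ + jumpCorrection a b N) (Set.Icc 0 1) :=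
    hφ.add (continuous_jumpCorrection a b N).continuousOn
  have h01 : (φ + jumpCorrection a b N) 0 = (φ + jumpCorrection a b N) 1 := by
    simp only [Pi.add_apply, jumpCorrection]; norm_num; linarith
  convert tendsto_average_comp_fract_of_eq hψ h01 hξ using 2
  rw [Pi.add_def, intervalIntegral.integral_add (hφ.intervalIntegrable_of_Icc zero_le_one)
    ((continuous_jumpCorrection a b N).intervalIntegrable _ _),
    integral_jumpCorrection]

theorem tendsto_average_comp_fract {φ : ℝ → ℝ} (hφ : ContinuousOn φ (Set.Icc 0 1)) {ξ : ℝ}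
    (hξ : Irrational ξ) :
    Tendsto (fun m : ℕ => (∑ n ∈ range m, φ (Int.fract (n * ξ))) / m) atTop
      (𝓝 (∫ u in (0 : ℝ)..1, φ u)) := by
  set J := φ 0 - φ 1
  have hfract (x : ℝ) : Int.fract x ∈ Set.Icc (0 : ℝ) 1 :=
    ⟨Int.fract_nonneg x, (Int.fract_lt_one x).le⟩
  refine tendsto_of_sandwich_family (c := fun N : ℕ => |J| / (N + 2))
    (lo := fun N m => (∑ n ∈ range m,
      (φ + jumpCorrection (-max (-J) 0) (-max J 0) N) (Int.fract (n * ξ))) / m)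
    (hi := fun N m => (∑ n ∈ range m,
      (φ + jumpCorrection (max J 0) (max (-J) 0) N) (Int.fract (n * ξ))) / m)
    ?_ (fun N m => ?_) (fun N m => ?_) (fun N => ?_) (fun N => ?_)
  · exact tendsto_const_nhds.div_atTop (tendsto_natCast_atTop_atTop.atTop_add tendsto_const_nhds)
  · refine div_le_div_of_nonneg_right (sum_le_sum fun n _ => ?_) m.cast_nonneg
    have := jumpCorrection_nonneg (le_max_right (-J) 0) (le_max_right J 0) N (hfract (n * ξ))
    simp only [Pi.add_apply, jumpCorrection] at this ⊢
    linarith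
  · refine div_le_div_of_nonneg_right (sum_le_sum fun n _ => ?_) m.cast_nonneg
    have := jumpCorrection_nonneg (le_max_right J 0) (le_max_right (-J) 0) N (hfract (n * ξ))
    simp only [Pi.add_apply] at this ⊢
    linarith
  · convert tendsto_average_comp_fract_add_jumpCorrection hφ hξ
      (by rw [sub_neg_eq_add, neg_add_eq_sub, max_zero_sub_eq_self]) N using 2
    rw [← max_zero_add_max_neg_zero_eq_abs_self J]
    ring
  · convert tendsto_average_comp_fract_add_jumpCorrection hφ hξ (max_zero_sub_eq_self J) N using 2
    rw [max_zero_add_max_neg_zero_eq_abs_self]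

lemma irrational_logb_two_three : Irrational (Real.logb 2 3) := by
  rintro ⟨q, hq⟩
  have hq_pos : 0 < q := by
    have := Real.logb_pos one_lt_two (by norm_num : (1 : ℝ) < 3)
    rw [← hq] at this
    exact_mod_cast this
  obtain ⟨k, hk⟩ : ∃ k : ℕ, (k : ℤ) = q.num :=
    ⟨q.num.toNat, Int.toNat_of_nonneg (Rat.num_nonneg.2 hq_pos.le)⟩
  have hpow : (2 : ℝ) ^ k = 3 ^ q.den := by
    have hk' : (k : ℝ) = q * q.den := by
      have : ((k : ℤ) : ℚ) = q * q.den := by rw [hk, Rat.mul_den_eq_num]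
      exact_mod_cast this
    rw [← Real.rpow_natCast, hk', Real.rpow_mul zero_le_two, hq,
      Real.rpow_logb two_pos (by norm_num) (by norm_num), Real.rpow_natCast]
  have hnat : 2 ^ k = 3 ^ q.den := by exact_mod_cast hpow
  have hodd : Odd (2 ^ k) := hnat ▸ Odd.pow (by decide)
  have hk0 : k = 0 := by
    by_contra hk0
    exact Nat.not_even_iff_odd.2 hodd ((Nat.even_pow' hk0).2 even_two)
  rw [hk0, pow_zero, eq_comm, Nat.pow_eq_one] at hnat
  simp [q.den_ne_zero] at hnat

lemma integral_two_rpow_neg : ∫ u in (0 : ℝ)..1, (2 : ℝ) ^ (-u) = 1 / (2 * Real.log 2) := by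
  have hlog : Real.log 2 ≠ 0 := (Real.log_pos one_lt_two).ne'
  have hderiv (u : ℝ) :
      HasDerivAt (fun u : ℝ => -(2 : ℝ) ^ (-u) / Real.log 2) ((2 : ℝ) ^ (-u)) u := by
    have := ((Real.hasStrictDerivAt_const_rpow two_pos (-u)).hasDerivAt.comp u
      (hasDerivAt_neg u)).neg.div_const (Real.log 2)
    exact this.congr_deriv (by field_simp)
  rw [intervalIntegral.integral_eq_sub_of_hasDerivAt (fun u _ => hderiv u)
    ((by fun_prop (disch := norm_num) : Continuous fun u : ℝ => (2 : ℝ) ^ (-u)).intervalIntegrable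
      _ _), neg_zero, Real.rpow_zero, Real.rpow_neg_one]
  field_simp
  norm_num

lemma two_zpow_floor_div_three_pow (n : ℕ) :
    (2 : ℝ) ^ ⌊(((n + 1 : ℕ) : ℝ) - 1) / (Real.log 2 / Real.log 3)⌋ / 3 ^ (n + 1)
      = 3⁻¹ * (2 : ℝ) ^ (-Int.fract (n * Real.logb 2 3)) := by
  have harg : (((n + 1 : ℕ) : ℝ) - 1) / (Real.log 2 / Real.log 3) = n * Real.logb 2 3 := by
    rw [Real.logb]; push_cast; field_simp; ring
  have h3 : (2 : ℝ) ^ (n * Real.logb 2 3) = 3 ^ n := by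
    rw [mul_comm, Real.rpow_mul zero_le_two, Real.rpow_logb two_pos (by norm_num) (by norm_num),
      Real.rpow_natCast]
  rw [harg, ← Real.rpow_intCast, ← Int.self_sub_fract, sub_eq_add_neg,
    Real.rpow_add two_pos, h3, pow_succ]
  field_simp

/-- For `α = log 2 / log 3` and `t_i = 2^{⌊(i−1)/α⌋}/3^i` (the terms of the
series `−Φ_ℝ(1c_α)`), the arithmetic means converge:
`(1/m) ∑_{i=1}^m t_i → 1/(6 ln 2)`. -/
theorem stmt18 :
    Tendsto (fun m : ℕ =>
        (∑ i ∈ Finset.Icc 1 m,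
          (2 : ℝ) ^ ⌊((i : ℝ) - 1) / (Real.log 2 / Real.log 3)⌋ / 3 ^ i) / m)
      atTop (nhds (1 / (6 * Real.log 2))) := by
  have hsum (m : ℕ) : ∑ i ∈ Finset.Icc 1 m,
      (2 : ℝ) ^ ⌊((i : ℝ) - 1) / (Real.log 2 / Real.log 3)⌋ / 3 ^ i
        = 3⁻¹ * ∑ n ∈ range m, (2 : ℝ) ^ (-Int.fract (n * Real.logb 2 3)) := by
    rw [← Ico_add_one_right_eq_Icc, sum_Ico_eq_sum_range, add_tsub_cancel_right, mul_sum]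
    exact sum_congr rfl fun n _ => by rw [add_comm 1 n, two_zpow_floor_div_three_pow]
  have hlim := (tendsto_average_comp_fract (φ := fun u => (2 : ℝ) ^ (-u))
    (by fun_prop (disch := norm_num)) irrational_logb_two_three).const_mul 3⁻¹
  rw [integral_two_rpow_neg] at hlim
  convert hlim using 2 with m
  · rw [hsum, mul_div_assoc]
  · ring
end

section
/- Let α = log 2 / log 3 and for each integer i ≥ 1 set t_i = 2^{⌊(i−1)/α⌋}/3^i (these are the terms of the series −Φ_ℝ(1c_α)). Then the geometric means converge: lim_{m→∞} (∏_{i=1}^m t_i)^{1/m} = √2/6. -/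
/-!
With `β = log 3 / log 2 = 1/α` and `⌊jβ⌋ = jβ - {jβ}`, the `j log 3` terms cancel and
`log (∏_{i ≤ m} t_i) = -m log 3 - log 2 · ∑_{j < m} {jβ}`, so the claim is that the fractional
parts `{jβ}` have mean `1/2`. This holds for every irrational `β`: for a good rational
approximation `|qβ - p| ≤ 1/q` with `p, q` coprime, each block `{(k + j)β}`, `j < q`, is a
small perturbation of the points `kβ + jp/q`, which are equally spaced mod `1`, so its sum is
`q/2 + O(1)`;
since `β` is irrational, such `q` can be taken arbitrarily large.
-/

open Finset Filter

theorem sum_range_eq_sum_zmod {M : Type*} [AddCommMonoid M] (q : ℕ) [NeZero q]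
    (f : ZMod q → M) :
    ∑ j ∈ range q, f j = ∑ x : ZMod q, f x :=
  sum_nbij' (fun j ↦ (j : ZMod q)) ZMod.val (fun _ _ ↦ mem_univ _)
    (fun x _ ↦ mem_range.mpr x.val_lt) (fun _ hj ↦ ZMod.val_cast_of_lt (mem_range.mp hj))
    (fun x _ ↦ ZMod.natCast_zmod_val x) (fun _ _ ↦ rfl)

theorem sum_range_emod_add_mul {q : ℕ} [NeZero q] {p : ℤ} (hp : IsCoprime p q) (m : ℤ) :
    ∑ j ∈ range q, (m + j * p) % q = ∑ k ∈ range q, (k : ℤ) := by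
  have hbij : Function.Bijective fun x : ZMod q ↦ m + x * p :=
    (Equiv.addLeft (m : ZMod q)).bijective.comp
      (Units.mulRight_bijective (ZMod.unitOfIsCoprime p hp))
  calc ∑ j ∈ range q, (m + j * p) % q
      = ∑ j ∈ range q, ((m + j * p : ZMod q).val : ℤ) := by
        refine sum_congr rfl fun j _ ↦ ?_
        rw [← ZMod.val_intCast]; push_cast; rfl
    _ = ∑ x : ZMod q, ((x : ZMod q).val : ℤ) := by
        rw [sum_range_eq_sum_zmod q fun x ↦ ((m + x * p : ZMod q).val : ℤ)]
        exact Fintype.sum_bijective _ hbij _ _ fun _ ↦ rfl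
    _ = ∑ k ∈ range q, (k : ℤ) := by
        rw [← sum_range_eq_sum_zmod q fun x ↦ (x.val : ℤ)]
        exact sum_congr rfl fun k hk ↦ by rw [ZMod.val_cast_of_lt (mem_range.mp hk)]

theorem two_mul_sum_range_natCast {R : Type*} [CommRing R] (n : ℕ) :
    2 * ∑ i ∈ range n, (i : R) = n * (n - 1) := by
  induction n with
  | zero => simp
  | succ n ih => rw [sum_range_succ, mul_add, ih]; push_cast; ring

theorem two_mul_sum_range_floor_add_mul_div {q : ℕ} [NeZero q] {p : ℤ} (hp : IsCoprime p q)
    (y : ℝ) :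
    2 * ∑ j ∈ range q, ⌊(y + j * p) / q⌋ = 2 * ⌊y⌋ + (p - 1) * (q - 1) := by
  have hfloor : ∀ j : ℕ, ⌊(y + j * p) / q⌋ = (⌊y⌋ + j * p) / q := fun j ↦ by
    rw [Int.floor_div_natCast, ← Int.floor_add_intCast]; push_cast; rfl
  have hsum : q * ∑ j ∈ range q, (⌊y⌋ + j * p) / q + ∑ j ∈ range q, (⌊y⌋ + j * p) % q =
      ∑ j ∈ range q, (⌊y⌋ + j * p) := by
    simp only [mul_sum, ← sum_add_distrib, Int.mul_ediv_add_emod]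
  rw [sum_range_emod_add_mul hp, sum_add_distrib, sum_const, card_range, nsmul_eq_mul,
    ← sum_mul] at hsum
  have hgauss := two_mul_sum_range_natCast (R := ℤ) q
  simp only [hfloor]
  have hq : (q : ℤ) ≠ 0 := by exact_mod_cast NeZero.ne q
  apply mul_left_cancel₀ hq
  linear_combination 2 * hsum + (p - 1) * hgauss

theorem abs_two_mul_sum_range_floor_add_mul_sub_le {β : ℝ} {q : ℕ} [NeZero q] {p : ℤ}
    (hp : IsCoprime p q) (hβ : |q * β - p| ≤ 1 / q) (c : ℝ) :
    |2 * ∑ j ∈ range q, (⌊c + j * β⌋ : ℝ) - 2 * ⌊q * c⌋ - (p - 1) * (q - 1)| ≤ 2 := by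
  have hq1 : (1 : ℝ) ≤ q := by exact_mod_cast NeZero.one_le
  have hq : (0 : ℝ) < q := by linarith
  set ε := q * β - p with hε
  have hjε : ∀ j ∈ range q, |j * ε| ≤ 1 := fun j hj ↦ by
    have hj : (j : ℝ) ≤ q := by exact_mod_cast (mem_range.mp hj).le
    calc |j * ε| = j * |ε| := by rw [abs_mul, Nat.abs_cast]
      _ ≤ q * (1 / q) := by gcongr
      _ = 1 := by field_simp
  -- `q (c + jβ) = q c + j p + j ε` is within `1` of `q c + j p`.
  have hfloor : ∀ j ∈ range q, ⌊(q * c - 1 + j * p) / q⌋ ≤ ⌊c + j * β⌋ ∧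
      ⌊c + j * β⌋ ≤ ⌊(q * c + 1 + j * p) / q⌋ := fun j hj ↦ by
    have hx : c + j * β = (q * c + j * p + j * ε) / q := by rw [hε]; field_simp; ring
    have := abs_le.mp (hjε j hj)
    rw [hx]
    exact ⟨Int.floor_mono (div_le_div_of_nonneg_right (by linarith) hq.le),
      Int.floor_mono (div_le_div_of_nonneg_right (by linarith) hq.le)⟩
  have hlow := two_mul_sum_range_floor_add_mul_div hp (q * c - 1)
  have hhigh := two_mul_sum_range_floor_add_mul_div hp (q * c + 1)
  rw [Int.floor_sub_one] at hlow
  rw [Int.floor_add_one] at hhigh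
  have hF₁ := sum_le_sum fun j hj ↦ (hfloor j hj).1
  have hF₂ := sum_le_sum fun j hj ↦ (hfloor j hj).2
  rw [abs_le]
  constructor
  · have h : 2 * ⌊q * c⌋ - 2 + (p - 1) * ((q : ℤ) - 1) ≤ 2 * ∑ j ∈ range q, ⌊c + j * β⌋ := by
      linarith
    have := (Int.cast_le (R := ℝ)).mpr h
    push_cast at this
    linarith
  · have h : 2 * ∑ j ∈ range q, ⌊c + j * β⌋ ≤ 2 * ⌊q * c⌋ + 2 + (p - 1) * ((q : ℤ) - 1) := by
      linarith
    have := (Int.cast_le (R := ℝ)).mpr h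
    push_cast at this
    linarith

theorem abs_sum_range_fract_add_mul_sub_le {β : ℝ} {q : ℕ} [NeZero q] {p : ℤ}
    (hp : IsCoprime p q) (hβ : |q * β - p| ≤ 1 / q) (c : ℝ) :
    |∑ j ∈ range q, Int.fract (c + j * β) - q / 2| ≤ 2 := by
  have hq1 : (1 : ℝ) ≤ q := by exact_mod_cast NeZero.one_le
  have hF := abs_le.mp (abs_two_mul_sum_range_floor_add_mul_sub_le hp hβ c)
  set ε := q * β - p with hε
  have hsum : ∑ j ∈ range q, Int.fract (c + j * β) =
      q * c + (p + ε) * (q - 1) / 2 - ∑ j ∈ range q, (⌊c + j * β⌋ : ℝ) := by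
    have hgauss := two_mul_sum_range_natCast (R := ℝ) q
    simp only [Int.fract, sum_sub_distrib, sum_add_distrib, sum_const, card_range, nsmul_eq_mul,
      ← sum_mul]
    linear_combination β / 2 * hgauss + (q - 1) / 2 * hε
  have hε' : |ε * (q - 1)| ≤ 1 := by
    rw [abs_mul, abs_of_nonneg (by linarith : (0 : ℝ) ≤ q - 1)]
    calc |ε| * (q - 1) ≤ 1 / q * q := by gcongr; linarith
      _ = 1 := by field_simp
  have hqc := Int.fract_nonneg (q * c)
  have hqc' := Int.fract_lt_one (q * c)
  rw [Int.fract] at hqc hqc'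
  rw [hsum, abs_le]
  constructor <;> nlinarith [abs_le.mp hε']

section UnitIntervalSequence

variable {a : ℕ → ℝ}

theorem abs_sum_range_sub_half_le_half (h₀ : ∀ i, 0 ≤ a i) (h₁ : ∀ i, a i ≤ 1) (n : ℕ) :
    |∑ i ∈ range n, a i - n / 2| ≤ n / 2 := by
  have hlow : 0 ≤ ∑ i ∈ range n, a i := sum_nonneg fun i _ ↦ h₀ i
  have hhigh : ∑ i ∈ range n, a i ≤ n := by
    simpa using sum_le_sum fun i (_ : i ∈ range n) ↦ h₁ i
  rw [abs_le]; constructor <;> linarith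

theorem abs_sum_range_sub_half_le_of_blocks (h₀ : ∀ i, 0 ≤ a i) (h₁ : ∀ i, a i ≤ 1) {q : ℕ}
    (hq : 0 < q) {C : ℝ} (hblock : ∀ k, |∑ j ∈ range q, a (k + j) - q / 2| ≤ C) (n : ℕ) :
    |∑ i ∈ range n, a i - n / 2| ≤ C * (n / q) + q / 2 := by
  have hsplit : ∀ r K : ℕ,
      |∑ i ∈ range (r + K * q), a i - ↑(r + K * q) / 2| ≤ C * K + r / 2 := by
    intro r K
    induction K with
    | zero => simpa using abs_sum_range_sub_half_le_half h₀ h₁ r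
    | succ K ih =>
      rw [add_mul, one_mul, ← add_assoc, sum_range_add]
      have := abs_le.mp (hblock (r + K * q))
      have := abs_le.mp ih
      rw [abs_le]; push_cast at *; constructor <;> linarith
  have hn := hsplit (n % q) (n / q)
  rw [Nat.mod_add_div'] at hn
  have hC : 0 ≤ C := (abs_nonneg _).trans (hblock 0)
  have hK : ((n / q : ℕ) : ℝ) ≤ n / q := Nat.cast_div_le
  have hr : ((n % q : ℕ) : ℝ) ≤ q := by exact_mod_cast (Nat.mod_lt n hq).le
  calc _ ≤ C * (n / q : ℕ) + (n % q : ℕ) / 2 := hn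
    _ ≤ C * (n / q) + q / 2 := by gcongr

theorem tendsto_average_of_blocks (h₀ : ∀ i, 0 ≤ a i) (h₁ : ∀ i, a i ≤ 1) {C : ℝ}
    (hblock : ∀ D : ℕ, ∃ q > D, ∀ k, |∑ j ∈ range q, a (k + j) - q / 2| ≤ C) :
    Tendsto (fun n ↦ (∑ i ∈ range n, a i) / n) atTop (nhds (1 / 2)) := by
  rw [Metric.tendsto_atTop]
  intro ε hε
  obtain ⟨q, hqD, hq⟩ := hblock ⌈2 * C / ε⌉₊
  have hq0 : 0 < q := by omega
  have hqR : (0 : ℝ) < q := by exact_mod_cast hq0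
  have hCq : C / q < ε / 2 := by
    have : 2 * C / ε < q := (Nat.le_ceil _).trans_lt (by exact_mod_cast hqD)
    rw [div_lt_iff₀ hε] at this
    rw [div_lt_iff₀ hqR]; linarith
  refine ⟨⌈q / ε⌉₊ + 1, fun n hn ↦ ?_⟩
  have hnR : q / ε < n := (Nat.le_ceil _).trans_lt (by exact_mod_cast hn)
  have hn0 : (0 : ℝ) < n := (div_pos hqR hε).trans hnR
  have hqn : q / 2 / n < ε / 2 := by
    rw [div_lt_iff₀ hε] at hnR
    rw [div_lt_iff₀ hn0]; linarith
  have hbound := abs_sum_range_sub_half_le_of_blocks h₀ h₁ hq0 hq n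
  calc dist ((∑ i ∈ range n, a i) / n) (1 / 2) = |∑ i ∈ range n, a i - n / 2| / n := by
        rw [Real.dist_eq, ← abs_of_pos hn0, ← abs_div, abs_of_pos hn0]; field_simp
    _ ≤ (C * (n / q) + q / 2) / n := by gcongr
    _ = C / q + q / 2 / n := by field_simp
    _ < ε := by linarith

end UnitIntervalSequence

theorem Irrational.exists_den_gt_abs_den_mul_sub_num_le {ξ : ℝ} (hξ : Irrational ξ) (D : ℕ) :
    ∃ x : ℚ, D < x.den ∧ |x.den * ξ - x.num| ≤ 1 / x.den := by
  obtain ⟨δ, hδ, hδ0⟩ := ((hξ.eventually_forall_le_dist_cast_rat_of_den_le D).filter_mono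
    nhdsWithin_le_nhds |>.and (self_mem_nhdsWithin (s := Set.Ioi (0 : ℝ)))).exists
  obtain ⟨n, hn⟩ := exists_nat_one_div_lt hδ0
  obtain ⟨x, hx, hxn⟩ := Real.exists_rat_abs_sub_le_and_den_le ξ n.succ_pos
  have hden : (0 : ℝ) < x.den := by exact_mod_cast x.pos
  have hclose : |ξ - x| * x.den ≤ 1 / (n + 1 + 1) := by
    rw [← le_div_iff₀ hden, div_div]; exact_mod_cast hx
  refine ⟨x, ?_, ?_⟩
  · by_contra! hxD
    have := hδ x hxD
    rw [Real.dist_eq] at this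
    have : |ξ - x| ≤ 1 / (n + 1 + 1) := hclose.trans' (le_mul_of_one_le_right (abs_nonneg _)
      (by exact_mod_cast x.pos))
    have : (1 : ℝ) / (n + 1 + 1) ≤ 1 / (n + 1) := by gcongr; linarith
    linarith
  · have hdn : (x.den : ℝ) ≤ n + 1 + 1 := by exact_mod_cast hxn.trans (Nat.le_succ _)
    calc |x.den * ξ - x.num| = |ξ - x| * x.den := by
          rw [← abs_of_pos hden, ← abs_mul, abs_of_pos hden, Rat.cast_def]; congr 1; field_simp
      _ ≤ 1 / (n + 1 + 1) := hclose
      _ ≤ 1 / x.den := by gcongr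

theorem tendsto_sum_range_fract_mul_div {β : ℝ} (hβ : Irrational β) :
    Tendsto (fun n ↦ (∑ i ∈ range n, Int.fract (i * β)) / n) atTop (nhds (1 / 2)) := by
  refine tendsto_average_of_blocks (fun _ ↦ Int.fract_nonneg _)
    (fun _ ↦ (Int.fract_lt_one _).le) (C := 2) fun D ↦ ?_
  obtain ⟨x, hxD, hx⟩ := hβ.exists_den_gt_abs_den_mul_sub_num_le D
  have hcop : IsCoprime x.num (x.den : ℤ) := Int.isCoprime_iff_nat_coprime.mpr x.reduced
  have : NeZero x.den := ⟨x.den_nz⟩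
  refine ⟨x.den, hxD, fun k ↦ ?_⟩
  simpa only [Nat.cast_add, add_mul] using
    abs_sum_range_fract_add_mul_sub_le hcop hx (k * β)

theorem irrational_log_three_div_log_two : Irrational (Real.log 3 / Real.log 2) := by
  rintro ⟨x, hx⟩
  have hx0 : 0 < x := by
    have : (0 : ℝ) < x := hx ▸ div_pos (Real.log_pos (by norm_num)) (Real.log_pos (by norm_num))
    exact_mod_cast this
  obtain ⟨a, ha⟩ := Int.eq_ofNat_of_zero_le (Rat.num_pos.mpr hx0).le
  have ha0 : a ≠ 0 := by have := Rat.num_pos.mpr hx0; omega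
  have hlog : Real.log ((3 : ℝ) ^ x.den) = Real.log ((2 : ℝ) ^ a) := by
    rw [Real.log_pow, Real.log_pow]
    rw [← Rat.num_div_den x, ha] at hx
    push_cast at hx
    field_simp at hx
    linarith
  have hpow : (3 : ℕ) ^ x.den = 2 ^ a := by
    exact_mod_cast Real.log_injOn_pos (Set.mem_Ioi.mpr (by positivity))
      (Set.mem_Ioi.mpr (by positivity)) hlog
  have hodd : Odd (3 ^ x.den) := Odd.pow (by decide)
  exact Nat.not_even_iff_odd.mpr hodd (hpow ▸ Nat.even_pow.mpr ⟨even_two, ha0⟩)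

theorem log_two_zpow_floor_div_three_pow_succ (j : ℕ) :
    Real.log ((2 : ℝ) ^ ⌊(((j + 1 : ℕ) : ℝ) - 1) / (Real.log 2 / Real.log 3)⌋ / 3 ^ (j + 1)) =
      -Real.log 3 - Real.log 2 * Int.fract (j * (Real.log 3 / Real.log 2)) := by
  have hlog2 : Real.log 2 ≠ 0 := (Real.log_pos one_lt_two).ne'
  rw [Real.log_div (zpow_ne_zero _ two_ne_zero) (pow_ne_zero _ three_ne_zero), Real.log_zpow,
    Real.log_pow, ← Int.self_sub_fract, Nat.cast_add_one, add_sub_cancel_right,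
    div_div_eq_mul_div, mul_div_assoc]
  field_simp
  ring

theorem log_prod_two_zpow_floor_div_three_pow (m : ℕ) :
    Real.log (∏ i ∈ Icc 1 m, (2 : ℝ) ^ ⌊((i : ℝ) - 1) / (Real.log 2 / Real.log 3)⌋ / 3 ^ i) =
      -(m * Real.log 3) -
        Real.log 2 * ∑ j ∈ range m, Int.fract (j * (Real.log 3 / Real.log 2)) := by
  rw [Real.log_prod fun i _ ↦ by positivity, ← Ico_add_one_right_eq_Icc, sum_Ico_eq_sum_range]
  simp only [Nat.add_sub_cancel, add_comm 1, log_two_zpow_floor_div_three_pow_succ,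
    sum_sub_distrib, sum_const, card_range, nsmul_eq_mul, mul_sum]
  ring

/-- For `α = log 2 / log 3` and `t_i = 2^{⌊(i−1)/α⌋}/3^i` (the terms of the
series `−Φ_ℝ(1c_α)`), the geometric means converge:
`(∏_{i=1}^m t_i)^{1/m} → √2/6`. -/
theorem stmt19 :
    Tendsto (fun m : ℕ =>
        (∏ i ∈ Finset.Icc 1 m,
          (2 : ℝ) ^ ⌊((i : ℝ) - 1) / (Real.log 2 / Real.log 3)⌋ / 3 ^ i) ^
            ((1 : ℝ) / m))
      atTop (nhds (Real.sqrt 2 / 6)) := by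
  have hlimit : Real.exp (-Real.log 3 - Real.log 2 * (1 / 2)) = Real.sqrt 2 / 6 := by
    rw [sub_eq_add_neg, Real.exp_add, Real.exp_neg, Real.exp_log three_pos, Real.exp_neg,
      ← Real.rpow_def_of_pos two_pos, ← Real.sqrt_eq_rpow]
    have hsq := Real.mul_self_sqrt (zero_le_two (α := ℝ))
    have : Real.sqrt 2 ≠ 0 := by positivity
    field_simp
    linarith
  rw [← hlimit]
  refine ((tendsto_const_nhds.sub ((tendsto_sum_range_fract_mul_div
    irrational_log_three_div_log_two).const_mul _)).rexp).congr' ?_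
  filter_upwards [eventually_ne_atTop 0] with m hm
  rw [Real.rpow_def_of_pos (prod_pos fun i _ ↦ by positivity),
    log_prod_two_zpow_floor_div_three_pow]
  congr 1
  field_simp
end
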